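/- arXiv:1904.11663 — 8 statements merged into one kernel-verified Lean document; each statement's English description precedes it below -/
import Mathlib

section
/- Let f be a rank function on the subsets of 𝒩 = {1,…,N} and let x* ∈ P_f. Define g(S) = min_{T : S ⊆ T ⊆ 𝒩} ( f(T) − ∑_{n∈T} x*_n ) for every S ⊆ 𝒩. Then g is normalized, monotone and submodular (i.e. a rank function), and the polyhedron {x ∈ ℝ^N : x_n ≥ 0 for all n, and ∑_{n∈S} x_n ≤ f(S) − ∑_{n∈S} x*_n for every S ⊆ 𝒩} equals the polymatroid P_g. -/
open Finset

/-!
Write `h(T) = f(T) - ∑_{n∈T} x*_n`. Subtracting a modular function keeps `h` submodular, and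
`x* ∈ P_f` makes `h ≥ 0` with `h(∅) = 0`. Minimizing a submodular function over supersets
preserves submodularity: if `U ⊇ S` and `V ⊇ T` are minimizers, then `U ∩ V ⊇ S ∩ T` and
`U ∪ V ⊇ S ∪ T` are admissible. Monotonicity of `g` is built in, and since nonnegative `x` has
monotone partial sums, `∑_S x ≤ h(S)` for all `S` is the same as `∑_S x ≤ g(S)` for all `S`.
-/

def IsMinOverSupersets {α : Type*} (h g : Finset α → ℝ) : Prop :=
  ∀ S, IsLeast {r : ℝ | ∃ T, S ⊆ T ∧ r = h T} (g S)

namespace IsMinOverSupersets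

variable {α : Type*} {h g : Finset α → ℝ}

theorem le_of_subset (hg : IsMinOverSupersets h g) {S T : Finset α} (hST : S ⊆ T) :
    g S ≤ h T :=
  (hg S).2 ⟨T, hST, rfl⟩

theorem exists_eq (hg : IsMinOverSupersets h g) (S : Finset α) : ∃ T, S ⊆ T ∧ g S = h T :=
  (hg S).1

theorem mono (hg : IsMinOverSupersets h g) {S T : Finset α} (hST : S ⊆ T) : g S ≤ g T := by
  obtain ⟨U, hTU, hU⟩ := hg.exists_eq T
  exact hU ▸ hg.le_of_subset (hST.trans hTU)

theorem submodular [DecidableEq α] (hg : IsMinOverSupersets h g)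
    (hsub : ∀ S T, h (S ∩ T) + h (S ∪ T) ≤ h S + h T) (S T : Finset α) :
    g (S ∩ T) + g (S ∪ T) ≤ g S + g T := by
  obtain ⟨U, hSU, hU⟩ := hg.exists_eq S
  obtain ⟨V, hTV, hV⟩ := hg.exists_eq T
  calc g (S ∩ T) + g (S ∪ T) ≤ h (U ∩ V) + h (U ∪ V) :=
        add_le_add (hg.le_of_subset (inter_subset_inter hSU hTV))
          (hg.le_of_subset (union_subset_union hSU hTV))
    _ ≤ h U + h V := hsub U V
    _ = g S + g T := by rw [hU, hV]

theorem empty_eq_zero (hg : IsMinOverSupersets h g) (h_empty : h ∅ = 0)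
    (h_nonneg : ∀ T, 0 ≤ h T) : g ∅ = 0 := by
  obtain ⟨T, -, hT⟩ := hg.exists_eq ∅
  exact le_antisymm (h_empty ▸ hg.le_of_subset subset_rfl) (hT ▸ h_nonneg T)

theorem forall_sum_le_iff (hg : IsMinOverSupersets h g) {x : α → ℝ} (hx : ∀ n, 0 ≤ x n) :
    (∀ S, ∑ n ∈ S, x n ≤ h S) ↔ ∀ S, ∑ n ∈ S, x n ≤ g S := by
  refine ⟨fun hxh S => ?_, fun hxg S => (hxg S).trans (hg.le_of_subset subset_rfl)⟩
  obtain ⟨T, hST, hT⟩ := hg.exists_eq S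
  calc ∑ n ∈ S, x n ≤ ∑ n ∈ T, x n := sum_le_sum_of_subset_of_nonneg hST fun n _ _ => hx n
    _ ≤ h T := hxh T
    _ = g S := hT.symm

end IsMinOverSupersets

theorem submodular_sub_sum {α : Type*} [DecidableEq α] {f : Finset α → ℝ}
    (hf : ∀ S T, f (S ∩ T) + f (S ∪ T) ≤ f S + f T) (x : α → ℝ) (S T : Finset α) :
    (f (S ∩ T) - ∑ n ∈ S ∩ T, x n) + (f (S ∪ T) - ∑ n ∈ S ∪ T, x n) ≤
      (f S - ∑ n ∈ S, x n) + (f T - ∑ n ∈ T, x n) := by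
  have hmodular := sum_union_inter (s₁ := S) (s₂ := T) (f := x)
  linarith [hf S T]

theorem quantizedVCG_statement_0_general (N : ℕ)
    (f : Finset (Fin N) → ℝ)
    (hf_norm : f ∅ = 0)
    (hf_sub : ∀ S T : Finset (Fin N), f (S ∩ T) + f (S ∪ T) ≤ f S + f T)
    (xstar : Fin N → ℝ)
    (hx_mem : ∀ S : Finset (Fin N), ∑ n ∈ S, xstar n ≤ f S)
    (g : Finset (Fin N) → ℝ)
    (hg : ∀ S : Finset (Fin N),
      IsLeast {r : ℝ | ∃ T : Finset (Fin N), S ⊆ T ∧ r = f T - ∑ n ∈ T, xstar n} (g S)) :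
    g ∅ = 0 ∧
    (∀ S T : Finset (Fin N), S ⊆ T → g S ≤ g T) ∧
    (∀ S T : Finset (Fin N), g (S ∩ T) + g (S ∪ T) ≤ g S + g T) ∧
    (∀ x : Fin N → ℝ,
      ((∀ n, 0 ≤ x n) ∧
        ∀ S : Finset (Fin N), ∑ n ∈ S, x n ≤ f S - ∑ n ∈ S, xstar n) ↔
      ((∀ n, 0 ≤ x n) ∧
        ∀ S : Finset (Fin N), ∑ n ∈ S, x n ≤ g S)) := by
  have hg' : IsMinOverSupersets (fun T => f T - ∑ n ∈ T, xstar n) g := hg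
  refine ⟨hg'.empty_eq_zero (by simp [hf_norm]) (fun T => sub_nonneg.2 (hx_mem T)),
    fun S T => hg'.mono, hg'.submodular (submodular_sub_sum hf_sub xstar),
    fun x => and_congr_right hg'.forall_sum_le_iff⟩

/-- Contracting a polymatroid at a point `x* ∈ P_f` yields a polymatroid:
`g(S) = min_{T ⊇ S} (f(T) - ∑_{n∈T} x*_n)` is a rank function, and the polyhedron
`{x ≥ 0 : ∑_{n∈S} x_n ≤ f(S) - ∑_{n∈S} x*_n}` equals `P_g`. -/
theorem quantizedVCG_statement_0 (N : ℕ) (hN : 1 ≤ N)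
    (f : Finset (Fin N) → ℝ)
    (hf_norm : f ∅ = 0)
    (hf_mono : ∀ S T : Finset (Fin N), S ⊆ T → f S ≤ f T)
    (hf_sub : ∀ S T : Finset (Fin N), f (S ∩ T) + f (S ∪ T) ≤ f S + f T)
    (xstar : Fin N → ℝ)
    (hx_nonneg : ∀ n, 0 ≤ xstar n)
    (hx_mem : ∀ S : Finset (Fin N), ∑ n ∈ S, xstar n ≤ f S)
    (g : Finset (Fin N) → ℝ)
    (hg : ∀ S : Finset (Fin N),
      IsLeast {r : ℝ | ∃ T : Finset (Fin N), S ⊆ T ∧ r = f T - ∑ n ∈ T, xstar n} (g S)) :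
    g ∅ = 0 ∧
    (∀ S T : Finset (Fin N), S ⊆ T → g S ≤ g T) ∧
    (∀ S T : Finset (Fin N), g (S ∩ T) + g (S ∪ T) ≤ g S + g T) ∧
    (∀ x : Fin N → ℝ,
      ((∀ n, 0 ≤ x n) ∧
        ∀ S : Finset (Fin N), ∑ n ∈ S, x n ≤ f S - ∑ n ∈ S, xstar n) ↔
      ((∀ n, 0 ≤ x n) ∧
        ∀ S : Finset (Fin N), ∑ n ∈ S, x n ≤ g S)) :=
  quantizedVCG_statement_0_general N f hf_norm hf_sub xstar hx_mem g hg
end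

section
/- For every rank function f on the subsets of 𝒩 = {1,…,N}, there exists a point x in the polymatroid P_f with ∑_{n=1}^N x_n = f(𝒩). -/
open Finset

/-!
Order the ground set and take the greedy vertex `x a = f (Iic a) - f (Iio a)`, the marginal gain
of `a` over the elements before it. Monotonicity makes it nonnegative and the sum over a prefix
telescopes to `f` of that prefix. For an arbitrary `s` with maximum `a`, submodularity applied to
`Iio a` and `s` bounds the marginal gain of `a` over `Iio a` by its marginal gain over `s.erase a`,
so `∑ x ≤ f s` follows by induction on `s`.
-/

section GreedyVertex

variable {α : Type*} [LinearOrder α] [LocallyFiniteOrderBot α] (f : Finset α → ℝ)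

def greedyVertex (a : α) : ℝ := f (Iic a) - f (Iio a)

variable {f}

theorem greedyVertex_nonneg (hf_mono : Monotone f) (a : α) : 0 ≤ greedyVertex f a :=
  sub_nonneg.2 <| hf_mono Iio_subset_Iic_self

theorem greedyVertex_add_le_of_forall_lt
    (hf_sub : ∀ S T : Finset α, f (S ∩ T) + f (S ∪ T) ≤ f S + f T)
    {a : α} {s : Finset α} (hs : ∀ b ∈ s, b < a) :
    greedyVertex f a + f s ≤ f (insert a s) := by
  have hs_Iio : s ⊆ Iio a := fun b hb => mem_Iio.2 (hs b hb)
  have h_inter : Iio a ∩ insert a s = s := by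
    rw [inter_insert_of_notMem (by simp), inter_eq_right.2 hs_Iio]
  have h_union : Iio a ∪ insert a s = Iic a := by
    rw [union_insert, union_eq_left.2 hs_Iio, Iio_insert]
  have := hf_sub (Iio a) (insert a s)
  rw [h_inter, h_union] at this
  unfold greedyVertex
  linarith

theorem sum_greedyVertex_le (hf_norm : f ∅ = 0)
    (hf_sub : ∀ S T : Finset α, f (S ∩ T) + f (S ∪ T) ≤ f S + f T) (s : Finset α) :
    ∑ a ∈ s, greedyVertex f a ≤ f s := by
  induction s using Finset.induction_on_max with
  | empty => simp [hf_norm]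
  | insert a s hs ih =>
    rw [sum_insert fun ha => (hs a ha).false]
    linarith [greedyVertex_add_le_of_forall_lt hf_sub hs]

theorem sum_greedyVertex_of_isLowerSet (hf_norm : f ∅ = 0) (s : Finset α)
    (hs : IsLowerSet (s : Set α)) : ∑ a ∈ s, greedyVertex f a = f s := by
  induction s using Finset.induction_on_max with
  | empty => simp [hf_norm]
  | insert a s hlt ih =>
    have h_eq : s = Iio a := by
      ext b
      refine ⟨fun hb => mem_Iio.2 (hlt b hb), fun hb => ?_⟩
      have hb' : b ∈ insert a s := hs (le_of_lt (mem_Iio.1 hb)) (by simp)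
      exact (mem_insert.1 hb').resolve_left (mem_Iio.1 hb).ne
    subst h_eq
    rw [sum_insert (by simp), ih (by simpa using isLowerSet_Iio a), Iio_insert, greedyVertex,
      sub_add_cancel]

end GreedyVertex

theorem quantizedVCG_statement_1_general (N : ℕ)
    (f : Finset (Fin N) → ℝ)
    (hf_norm : f ∅ = 0)
    (hf_mono : ∀ S T : Finset (Fin N), S ⊆ T → f S ≤ f T)
    (hf_sub : ∀ S T : Finset (Fin N), f (S ∩ T) + f (S ∪ T) ≤ f S + f T) :
    ∃ x : Fin N → ℝ,
      (∀ n, 0 ≤ x n) ∧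
      (∀ S : Finset (Fin N), ∑ n ∈ S, x n ≤ f S) ∧
      ∑ n, x n = f Finset.univ :=
  ⟨greedyVertex f, greedyVertex_nonneg (fun _ _ h => hf_mono _ _ h),
    sum_greedyVertex_le hf_norm hf_sub,
    sum_greedyVertex_of_isLowerSet hf_norm univ (by simpa using isLowerSet_univ)⟩

/-- Every polymatroid `P_f` contains a point `x` with `∑_n x_n = f(𝒩)`. -/
theorem quantizedVCG_statement_1 (N : ℕ) (hN : 1 ≤ N)
    (f : Finset (Fin N) → ℝ)
    (hf_norm : f ∅ = 0)
    (hf_mono : ∀ S T : Finset (Fin N), S ⊆ T → f S ≤ f T)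
    (hf_sub : ∀ S T : Finset (Fin N), f (S ∩ T) + f (S ∪ T) ≤ f S + f T) :
    ∃ x : Fin N → ℝ,
      (∀ n, 0 ≤ x n) ∧
      (∀ S : Finset (Fin N), ∑ n ∈ S, x n ≤ f S) ∧
      ∑ n, x n = f Finset.univ :=
  quantizedVCG_statement_1_general N f hf_norm hf_mono hf_sub
end

section
/- Let N ≥ 2 and let f be a rank function on the subsets of 𝒩 = {1,…,N} with f({i}) > 0 for every i ∈ 𝒩. Then for every η > 0 there exists a rank function f̃ on the subsets of 𝒩 such that Δf̃ > 0 and 0 ≤ f(S) − f̃(S) ≤ η for all S ⊆ 𝒩. -/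
open Finset

/-- The minimum distance `Δf` of a set function `f` on subsets of `Fin N`:
the minimum over `S ⊆ 𝒩` and distinct `i, j ∈ 𝒩 ∖ S` of
`|f(S∪{i}) + f(S∪{j}) − f(S) − f(S∪{i,j})|`. -/
noncomputable def minDist (N : ℕ) (f : Finset (Fin N) → ℝ) : ℝ :=
  sInf {d : ℝ | ∃ S : Finset (Fin N), ∃ i j : Fin N, i ∉ S ∧ j ∉ S ∧ i ≠ j ∧
    d = |f (insert i S) + f (insert j S) - f S - f (insert i (insert j S))|}

lemma pow_half_convex (a q x : ℕ) (h : a ≤ q) :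
    ((1:ℝ)/2)^(a+x) + (1/2)^q ≤ (1/2)^a + (1/2)^(q+x) := by
  have h1 : ((1:ℝ)/2)^q ≤ (1/2)^a :=
    pow_le_pow_of_le_one (by norm_num) (by norm_num) h
  have h2 : ((1:ℝ)/2)^x ≤ 1 := pow_le_one₀ (by norm_num) (by norm_num)
  rw [pow_add, pow_add]
  nlinarith [mul_nonneg (sub_nonneg.2 h1) (sub_nonneg.2 h2)]

/-- For every rank function `f` with `f({i}) > 0` for all `i` and every `η > 0`
there is a rank function `f̃` with `Δf̃ > 0` and `0 ≤ f(S) − f̃(S) ≤ η` for all `S`. -/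
theorem quantizedVCG_statement_3 (N : ℕ) (hN : 2 ≤ N)
    (f : Finset (Fin N) → ℝ)
    (hf_norm : f ∅ = 0)
    (hf_mono : ∀ S T : Finset (Fin N), S ⊆ T → f S ≤ f T)
    (hf_sub : ∀ S T : Finset (Fin N), f (S ∩ T) + f (S ∪ T) ≤ f S + f T)
    (hf_pos : ∀ i : Fin N, 0 < f {i})
    (η : ℝ) (hη : 0 < η) :
    ∃ ft : Finset (Fin N) → ℝ,
      ft ∅ = 0 ∧
      (∀ S T : Finset (Fin N), S ⊆ T → ft S ≤ ft T) ∧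
      (∀ S T : Finset (Fin N), ft (S ∩ T) + ft (S ∪ T) ≤ ft S + ft T) ∧
      0 < minDist N ft ∧
      (∀ S : Finset (Fin N), 0 ≤ f S - ft S ∧ f S - ft S ≤ η) := by
  have hNpos : 0 < N := by omega
  have hne : (univ : Finset (Fin N)).Nonempty := ⟨⟨0, hNpos⟩, mem_univ _⟩
  set m : ℝ := univ.inf' hne (fun i => f {i}) with hm
  have hm_pos : 0 < m := by
    rw [hm, Finset.lt_inf'_iff]
    exact fun i _ => hf_pos i
  have hm_le : ∀ i : Fin N, m ≤ f {i} := fun i => inf'_le _ (mem_univ i)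
  have hf0 : ∀ S : Finset (Fin N), 0 ≤ f S := fun S => by
    have := hf_mono ∅ S (empty_subset S); linarith [hf_norm]
  have hm_leS : ∀ S : Finset (Fin N), S.Nonempty → m ≤ f S := by
    rintro S ⟨i, hi⟩
    exact le_trans (hm_le i) (hf_mono {i} S (singleton_subset_iff.2 hi))
  have hU1 : (0:ℝ) < f univ + 1 := by linarith [hf0 univ]
  set ε : ℝ := min (η / (f univ + 1)) (1/2) with hεdef
  have hε_pos : 0 < ε := lt_min (div_pos hη hU1) (by norm_num)
  have hε_half : ε ≤ 1/2 := min_le_right _ _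
  have hε1 : ε < 1 := by linarith
  have hεf : ∀ S : Finset (Fin N), ε * f S ≤ η := by
    intro S
    have h1 : ε * f S ≤ ε * f univ :=
      mul_le_mul_of_nonneg_left (hf_mono S univ (subset_univ S)) hε_pos.le
    have h2 : ε * f univ ≤ (η / (f univ + 1)) * f univ :=
      mul_le_mul_of_nonneg_right (min_le_left _ _) (hf0 univ)
    have h3 : (η / (f univ + 1)) * f univ ≤ η := by
      rw [div_mul_eq_mul_div, div_le_iff₀ hU1]
      nlinarith [hf0 univ]
    linarith
  set g : Finset (Fin N) → ℝ := fun S => m * (1 - (1/2:ℝ) ^ S.card) with hg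
  have hg_nonneg : ∀ S : Finset (Fin N), 0 ≤ g S := by
    intro S
    have : ((1:ℝ)/2) ^ S.card ≤ 1 := pow_le_one₀ (by norm_num) (by norm_num)
    simp only [hg]
    nlinarith
  have hg_le : ∀ S : Finset (Fin N), g S ≤ f S := by
    intro S
    rcases S.eq_empty_or_nonempty with rfl | hS
    · simp [hg, hf_norm]
    · have h1 : ((0:ℝ)) ≤ (1/2:ℝ) ^ S.card := by positivity
      have := hm_leS S hS
      simp only [hg]
      nlinarith
  refine ⟨fun S => (1 - ε) * f S + ε * g S, ?_, ?_, ?_, ?_, ?_⟩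
  · simp [hg, hf_norm]
  · -- monotone
    intro S T hST
    have h1 : f S ≤ f T := hf_mono S T hST
    have h2 : g S ≤ g T := by
      have hc : S.card ≤ T.card := card_le_card hST
      have : ((1:ℝ)/2) ^ T.card ≤ (1/2) ^ S.card :=
        pow_le_pow_of_le_one (by norm_num) (by norm_num) hc
      simp only [hg]
      nlinarith
    have h3 : (0:ℝ) ≤ 1 - ε := by linarith
    show (1 - ε) * f S + ε * g S ≤ (1 - ε) * f T + ε * g T
    have := mul_le_mul_of_nonneg_left h1 h3
    have := mul_le_mul_of_nonneg_left h2 hε_pos.le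
    linarith
  · -- submodular
    intro S T
    simp only []
    have hau : (S ∩ T).card + (S ∪ T).card = S.card + T.card :=
      card_inter_add_card_union S T
    have haq : (S ∩ T).card ≤ T.card := card_le_card inter_subset_right
    have hap : (S ∩ T).card ≤ S.card := card_le_card inter_subset_left
    have hgsub : g (S ∩ T) + g (S ∪ T) ≤ g S + g T := by
      have hx : S.card = (S ∩ T).card + (S.card - (S ∩ T).card) := by omega
      have hu : (S ∪ T).card = T.card + (S.card - (S ∩ T).card) := by omega
      have key := pow_half_convex (S ∩ T).card T.card (S.card - (S ∩ T).card) haq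
      rw [← hx] at key
      simp only [hg, hu]
      nlinarith
    have hfsub := hf_sub S T
    have h3 : (0:ℝ) ≤ 1 - ε := by linarith
    nlinarith
  · -- minDist positive
    have hδ : (0:ℝ) < ε * m * (1/2) ^ (N + 2) := by positivity
    have hlb : ε * m * (1/2) ^ (N + 2) ≤ minDist N (fun S => (1 - ε) * f S + ε * g S) := by
      apply le_csInf
      · refine ⟨_, ∅, ⟨0, hNpos⟩, ⟨1, by omega⟩, notMem_empty _, notMem_empty _,
          ?_, rfl⟩
        simp [Fin.ext_iff]
      · rintro d ⟨S, i, j, hiS, hjS, hij, rfl⟩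
        have hiJS : i ∉ insert j S := by simp [hij, hiS]
        have hci : (insert i S).card = S.card + 1 := card_insert_of_notMem hiS
        have hcj : (insert j S).card = S.card + 1 := card_insert_of_notMem hjS
        have hcij : (insert i (insert j S)).card = S.card + 2 := by
          rw [card_insert_of_notMem hiJS, card_insert_of_notMem hjS]
        have hinter : insert i S ∩ insert j S = S := by
          ext a
          simp only [mem_inter, mem_insert]
          constructor
          · rintro ⟨rfl | h1, h2 | h2⟩
            · exact absurd h2 hij
            · exact h2
            · exact h1
            · exact h1
          · intro h; exact ⟨Or.inr h, Or.inr h⟩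
        have hunion : insert i S ∪ insert j S = insert i (insert j S) := by
          rw [insert_union, union_insert, union_self]
        have hF : 0 ≤ f (insert i S) + f (insert j S) - f S
            - f (insert i (insert j S)) := by
          have := hf_sub (insert i S) (insert j S)
          rw [hinter, hunion] at this
          linarith
        have hsN : S.card + 2 ≤ N + 2 := by
          have := card_le_card (subset_univ S)
          simp only [card_univ, Fintype.card_fin] at this
          omega
        have hpow : ((1:ℝ)/2) ^ (N + 2) ≤ (1/2) ^ (S.card + 2) :=
          pow_le_pow_of_le_one (by norm_num) (by norm_num) hsN
        have hE : ε * m * (1/2) ^ (N + 2) ≤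
            ((1 - ε) * f (insert i S) + ε * g (insert i S))
            + ((1 - ε) * f (insert j S) + ε * g (insert j S))
            - ((1 - ε) * f S + ε * g S)
            - ((1 - ε) * f (insert i (insert j S)) + ε * g (insert i (insert j S))) := by
          simp only [hg, hci, hcj, hcij]
          have h3 : (0:ℝ) ≤ 1 - ε := by linarith
          have e1 : ((1:ℝ)/2) ^ (S.card + 1) = (1/2) ^ S.card * (1/2) := pow_succ _ _
          have e2 : ((1:ℝ)/2) ^ (S.card + 2) = (1/2) ^ S.card * (1/4) := by
            rw [pow_succ, pow_succ]; ring
          rw [e1, e2]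
          have hpow' : ((1:ℝ)/2) ^ (N + 2) ≤ (1/2) ^ S.card * (1/4) := by
            rw [← e2]; exact hpow
          have hkey : ε * m * ((1:ℝ)/2) ^ (N + 2) ≤ ε * m * ((1/2) ^ S.card * (1/4)) :=
            mul_le_mul_of_nonneg_left hpow' (by positivity)
          have expand : (1 - ε) * f (insert i S) + ε * (m * (1 - (1/2:ℝ) ^ S.card * (1/2)))
              + ((1 - ε) * f (insert j S) + ε * (m * (1 - (1/2:ℝ) ^ S.card * (1/2))))
              - ((1 - ε) * f S + ε * (m * (1 - (1/2:ℝ) ^ S.card)))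
              - ((1 - ε) * f (insert i (insert j S)) + ε * (m * (1 - (1/2:ℝ) ^ S.card * (1/4))))
              = (1 - ε) * (f (insert i S) + f (insert j S) - f S - f (insert i (insert j S)))
                + ε * m * ((1/2) ^ S.card * (1/4)) := by ring
          rw [expand]
          linarith [mul_nonneg h3 hF, hkey]
        exact le_trans hE (le_abs_self _)
    linarith
  · -- approximation bounds
    intro S
    have heq : f S - ((1 - ε) * f S + ε * g S) = ε * (f S - g S) := by ring
    rw [heq]
    constructor
    · exact mul_nonneg hε_pos.le (by linarith [hg_le S])
    · have : ε * (f S - g S) ≤ ε * f S :=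
        mul_le_mul_of_nonneg_left (by linarith [hg_nonneg S]) hε_pos.le
      linarith [hεf S]
end

section
/- Let N ≥ 2, let f be a rank function on the subsets of 𝒩 = {1,…,N} with minimum distance Δf > 0, and let M be an integer with M ≥ 2/Δf. Define f̃(S) = ⌊M·f(S)⌋ for every S ⊆ 𝒩. Then f̃ is an integer-valued rank function, i.e. f̃ is normalized (f̃(∅) = 0), monotone (f̃(S) ≤ f̃(T) whenever S ⊆ T), and submodular (f̃(S) + f̃(T) ≥ f̃(S∩T) + f̃(S∪T) for all S, T ⊆ 𝒩). -/
open Finset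

lemma strong_diminishing (N : ℕ) (f : Finset (Fin N) → ℝ)
    (hf_sub : ∀ S T : Finset (Fin N), f (S ∩ T) + f (S ∪ T) ≤ f S + f T)
    (A B : Finset (Fin N)) (hAB : A ⊆ B) (i : Fin N) (hiB : i ∈ B) (hiA : i ∉ A)
    (j : Fin N) (hjB : j ∉ B) :
    f (insert j B) + f A + minDist N f ≤ f (insert j A) + f B := by
  have hjA : j ∉ A := fun h => hjB (hAB h)
  have hij : i ≠ j := fun h => hjB (h ▸ hiB)
  -- quadratic term at base A
  have hinter : (insert i A) ∩ (insert j A) = A := by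
    ext x; simp only [mem_inter, mem_insert]
    constructor
    · rintro ⟨h1 | h1, h2 | h2⟩
      · exact absurd (h1.symm.trans h2) hij
      · assumption
      · assumption
      · assumption
    · intro h; exact ⟨Or.inr h, Or.inr h⟩
  have hunion : (insert i A) ∪ (insert j A) = insert i (insert j A) := by
    ext x; simp only [mem_union, mem_insert]; tauto
  have hterm : 0 ≤ f (insert i A) + f (insert j A) - f A - f (insert i (insert j A)) := by
    have := hf_sub (insert i A) (insert j A)
    rw [hinter, hunion] at this; linarith
  have hmem : |f (insert i A) + f (insert j A) - f A - f (insert i (insert j A))| ∈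
      {d : ℝ | ∃ S : Finset (Fin N), ∃ i j : Fin N, i ∉ S ∧ j ∉ S ∧ i ≠ j ∧
        d = |f (insert i S) + f (insert j S) - f S - f (insert i (insert j S))|} :=
    ⟨A, i, j, hiA, hjA, hij, rfl⟩
  have hbdd : BddBelow {d : ℝ | ∃ S : Finset (Fin N), ∃ i j : Fin N, i ∉ S ∧ j ∉ S ∧ i ≠ j ∧
      d = |f (insert i S) + f (insert j S) - f S - f (insert i (insert j S))|} := by
    refine ⟨0, fun d hd => ?_⟩
    obtain ⟨S, i', j', _, _, _, rfl⟩ := hd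
    exact abs_nonneg _
  have hΔle : minDist N f ≤
      f (insert i A) + f (insert j A) - f A - f (insert i (insert j A)) := by
    have := csInf_le hbdd hmem
    rwa [abs_of_nonneg hterm] at this
  -- diminishing returns from insert i A ⊆ B
  have hiAB : insert i A ⊆ B := insert_subset hiB hAB
  have hinter2 : (insert j (insert i A)) ∩ B = insert i A := by
    ext x; simp only [mem_inter, mem_insert]
    constructor
    · rintro ⟨h1 | h1 | h1, h2⟩
      · exact absurd (h1 ▸ h2) hjB
      · exact Or.inl h1
      · exact Or.inr h1
    · rintro (h | h)
      · exact ⟨Or.inr (Or.inl h), h ▸ hiB⟩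
      · exact ⟨Or.inr (Or.inr h), hAB h⟩

  have hunion2 : (insert j (insert i A)) ∪ B = insert j B := by
    ext x; simp only [mem_union, mem_insert]
    constructor
    · rintro ((h | h | h) | h)
      · exact Or.inl h
      · exact Or.inr (h ▸ hiB)
      · exact Or.inr (hAB h)
      · exact Or.inr h
    · rintro (h | h)
      · exact Or.inl (Or.inl h)
      · exact Or.inr h
  have hdim := hf_sub (insert j (insert i A)) B
  rw [hinter2, hunion2] at hdim
  have hcomm : insert j (insert i A) = insert i (insert j A) := Finset.insert_comm j i A
  rw [hcomm] at hdim
  linarith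

lemma gap_lemma (N : ℕ) (f : Finset (Fin N) → ℝ)
    (hf_sub : ∀ S T : Finset (Fin N), f (S ∩ T) + f (S ∪ T) ≤ f S + f T)
    (S T : Finset (Fin N)) (i : Fin N) (hiS : i ∈ S) (hiT : i ∉ T)
    (j : Fin N) (hjT : j ∈ T) (hjS : j ∉ S) :
    f (S ∩ T) + f (S ∪ T) + minDist N f ≤ f S + f T := by
  set T' := T.erase j with hT'
  have hjT' : j ∉ T' := notMem_erase j T
  have hiT' : i ∉ T' := fun h => hiT (mem_of_mem_erase h)
  have hsub := hf_sub S T'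
  have hST' : S ∩ T' = S ∩ T := by
    ext x; simp only [mem_inter, mem_erase, hT']
    constructor
    · rintro ⟨h1, _, h2⟩; exact ⟨h1, h2⟩
    · rintro ⟨h1, h2⟩; exact ⟨h1, fun h => hjS (h ▸ h1), h2⟩
  rw [hST'] at hsub
  have hiST' : i ∈ S ∪ T' := mem_union_left _ hiS
  have hjST' : j ∉ S ∪ T' := by
    simp only [mem_union]; rintro (h | h) <;> [exact hjS h; exact hjT' h]
  have hkey := strong_diminishing N f hf_sub T' (S ∪ T') (subset_union_right) i hiST' hiT'
    j hjST'
  have h1 : insert j (S ∪ T') = S ∪ T := by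
    rw [hT']; ext x; simp only [mem_insert, mem_union, mem_erase]
    constructor
    · rintro (h | h | ⟨_, h⟩)
      · exact Or.inr (h ▸ hjT)
      · exact Or.inl h
      · exact Or.inr h
    · rintro (h | h)
      · exact Or.inr (Or.inl h)
      · by_cases hx : x = j
        · exact Or.inl hx
        · exact Or.inr (Or.inr ⟨hx, h⟩)
  have h2 : insert j T' = T := insert_erase hjT
  rw [h1, h2] at hkey
  linarith

/-- If `f` is a rank function with `Δf > 0` and `M ≥ 2/Δf` is an integer,
then `f̃(S) = ⌊M·f(S)⌋` is an integer-valued rank function (normalized, monotone,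
submodular). -/
theorem quantizedVCG_statement_6 (N : ℕ) (hN : 2 ≤ N)
    (f : Finset (Fin N) → ℝ)
    (hf_norm : f ∅ = 0)
    (hf_mono : ∀ S T : Finset (Fin N), S ⊆ T → f S ≤ f T)
    (hf_sub : ∀ S T : Finset (Fin N), f (S ∩ T) + f (S ∪ T) ≤ f S + f T)
    (hΔ : 0 < minDist N f)
    (M : ℕ) (hM : 2 / minDist N f ≤ (M : ℝ))
    (ft : Finset (Fin N) → ℤ)
    (hft : ∀ S : Finset (Fin N), ft S = ⌊(M : ℝ) * f S⌋) :
    ft ∅ = 0 ∧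
    (∀ S T : Finset (Fin N), S ⊆ T → ft S ≤ ft T) ∧
    (∀ S T : Finset (Fin N), ft (S ∩ T) + ft (S ∪ T) ≤ ft S + ft T) := by
  have hM0 : (0:ℝ) ≤ (M:ℝ) := Nat.cast_nonneg M
  have hMΔ : 2 ≤ (M:ℝ) * minDist N f := by
    rw [div_le_iff₀ hΔ] at hM
    linarith
  refine ⟨?_, ?_, ?_⟩
  · rw [hft, hf_norm, mul_zero, Int.floor_zero]
  · intro S T hST
    rw [hft, hft]
    exact Int.floor_le_floor (mul_le_mul_of_nonneg_left (hf_mono S T hST) hM0)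
  · intro S T
    by_cases hST : S ⊆ T
    · rw [inter_eq_left.mpr hST, union_eq_right.mpr hST]
    by_cases hTS : T ⊆ S
    · rw [inter_eq_right.mpr hTS, union_eq_left.mpr hTS]
      omega
    · obtain ⟨i, hiS, hiT⟩ := not_subset.mp hST
      obtain ⟨j, hjT, hjS⟩ := not_subset.mp hTS
      have hgap := gap_lemma N f hf_sub S T i hiS hiT j hjT hjS
      rw [hft, hft, hft, hft]
      have h1 : ((⌊(M:ℝ) * f (S ∩ T)⌋ + ⌊(M:ℝ) * f (S ∪ T)⌋ : ℤ) : ℝ) ≤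
          (M:ℝ) * f (S ∩ T) + (M:ℝ) * f (S ∪ T) := by
        push_cast
        exact add_le_add (Int.floor_le _) (Int.floor_le _)
      have h2 : (M:ℝ) * f (S ∩ T) + (M:ℝ) * f (S ∪ T) ≤
          (M:ℝ) * f S + (M:ℝ) * f T - 2 := by
        have := mul_le_mul_of_nonneg_left hgap hM0
        nlinarith
      have h3 : (M:ℝ) * f S - 1 < (⌊(M:ℝ) * f S⌋ : ℝ) := by
        have := Int.lt_floor_add_one ((M:ℝ) * f S); linarith
      have h4 : (M:ℝ) * f T - 1 < (⌊(M:ℝ) * f T⌋ : ℝ) := by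
        have := Int.lt_floor_add_one ((M:ℝ) * f T); linarith
      have : ((⌊(M:ℝ) * f (S ∩ T)⌋ + ⌊(M:ℝ) * f (S ∪ T)⌋ : ℤ) : ℝ) <
          ((⌊(M:ℝ) * f S⌋ + ⌊(M:ℝ) * f T⌋ : ℤ) : ℝ) := by
        push_cast at *
        linarith
      exact_mod_cast le_of_lt this
end

section
/- Let f : 2^𝒩 → ℤ be an integer-valued rank function on the subsets of 𝒩 = {1,…,N}. Then there exists y ∈ ℕ^N with ∑_{n∈S} y_n ≤ f(S) for every S ⊆ 𝒩 and ∑_{n=1}^N y_n = f(𝒩). -/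
open Finset

/-! Edmonds' greedy algorithm. Order the ground set and give each element its marginal value
`y i = f {j ≤ i} - f {j < i}`, which is nonnegative by monotonicity. The sum over the whole
ground set telescopes to `f 𝒩`. For a nonempty `S` with largest element `m`, submodularity applied
to `S` and `{j < m}` (whose intersection is `S \ {m}` and whose union is `{j ≤ m}`) reads
`y m ≤ f S - f (S \ {m})`, so the constraint for `S` follows from the one for `S \ {m}`. -/

namespace Finset

variable {α : Type*} [LinearOrder α] [LocallyFiniteOrderBot α]

theorem insert_inter_Iio_of_forall_lt {m : α} {S : Finset α} (hlt : ∀ x ∈ S, x < m) :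
    insert m S ∩ Iio m = S := by
  ext x; simpa using fun hx => hlt x hx

theorem insert_subset_Iic_of_forall_lt {m : α} {S : Finset α} (hlt : ∀ x ∈ S, x < m) :
    insert m S ⊆ Iic m :=
  insert_subset (mem_Iic.2 le_rfl) fun x hx => mem_Iic.2 (hlt x hx).le

theorem sum_sub_inter_Iio_eq (f : Finset α → ℤ) (S : Finset α) :
    ∑ i ∈ S, (f (S ∩ Iic i) - f (S ∩ Iio i)) = f S - f ∅ := by
  induction S using Finset.induction_on_max with
  | empty => simp
  | insert m S hlt ih =>
    have h_below : ∀ i ∈ S, f (insert m S ∩ Iic i) - f (insert m S ∩ Iio i) =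
        f (S ∩ Iic i) - f (S ∩ Iio i) := fun i hi => by
      have him := hlt i hi
      rw [insert_inter_of_notMem (by simpa using him), insert_inter_of_notMem (by simpa using him.le)]
    rw [sum_insert fun h => lt_irrefl m (hlt m h), sum_congr rfl h_below, ih,
      inter_eq_left.2 (insert_subset_Iic_of_forall_lt hlt), insert_inter_Iio_of_forall_lt hlt]
    ring

end Finset

section Greedy

variable {α : Type*} [LinearOrder α] [LocallyFiniteOrderBot α]

def greedyPoint (f : Finset α → ℤ) (i : α) : ℤ := f (Iic i) - f (Iio i)

theorem greedyPoint_nonneg {f : Finset α → ℤ} (hf_mono : Monotone f) (i : α) :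
    0 ≤ greedyPoint f i :=
  sub_nonneg.2 (hf_mono Iio_subset_Iic_self)

theorem sum_greedyPoint_le {f : Finset α → ℤ} (hf_empty : f ∅ = 0)
    (hf_sub : ∀ S T, f (S ∩ T) + f (S ∪ T) ≤ f S + f T) (S : Finset α) :
    ∑ i ∈ S, greedyPoint f i ≤ f S := by
  induction S using Finset.induction_on_max with
  | empty => simp [hf_empty]
  | insert m S hlt ih =>
    have h_union : insert m S ∪ Iio m = Iic m := by
      rw [insert_union, union_eq_right.2 fun x hx => mem_Iio.2 (hlt x hx), Iio_insert]
    have h_submod := hf_sub (insert m S) (Iio m)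
    rw [insert_inter_Iio_of_forall_lt hlt, h_union] at h_submod
    rw [sum_insert fun h => lt_irrefl m (hlt m h), greedyPoint]
    linarith

theorem sum_greedyPoint_univ [Fintype α] (f : Finset α → ℤ) :
    ∑ i, greedyPoint f i = f univ - f ∅ := by
  simpa only [univ_inter, greedyPoint] using sum_sub_inter_Iio_eq f univ

end Greedy

theorem quantizedVCG_statement_7_general (N : ℕ)
    (f : Finset (Fin N) → ℤ)
    (hf_norm : f ∅ = 0)
    (hf_mono : ∀ S T : Finset (Fin N), S ⊆ T → f S ≤ f T)
    (hf_sub : ∀ S T : Finset (Fin N), f (S ∩ T) + f (S ∪ T) ≤ f S + f T) :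
    ∃ y : Fin N → ℕ,
      (∀ S : Finset (Fin N), ∑ n ∈ S, (y n : ℤ) ≤ f S) ∧
      ∑ n, (y n : ℤ) = f Finset.univ := by
  have hy : ∀ i, ((greedyPoint f i).toNat : ℤ) = greedyPoint f i := fun i =>
    Int.toNat_of_nonneg (greedyPoint_nonneg (fun S T h => hf_mono S T h) i)
  refine ⟨fun i => (greedyPoint f i).toNat, fun S => ?_, ?_⟩
  · simpa only [hy] using sum_greedyPoint_le hf_norm hf_sub S
  · simpa only [hy, hf_norm, sub_zero] using sum_greedyPoint_univ f

/-- For every integer-valued rank function `f` there exists `y ∈ ℕ^N`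
in the integral polymatroid of `f` with `∑_n y_n = f(𝒩)`. -/
theorem quantizedVCG_statement_7 (N : ℕ) (hN : 1 ≤ N)
    (f : Finset (Fin N) → ℤ)
    (hf_norm : f ∅ = 0)
    (hf_mono : ∀ S T : Finset (Fin N), S ⊆ T → f S ≤ f T)
    (hf_sub : ∀ S T : Finset (Fin N), f (S ∩ T) + f (S ∪ T) ≤ f S + f T) :
    ∃ y : Fin N → ℕ,
      (∀ S : Finset (Fin N), ∑ n ∈ S, (y n : ℤ) ≤ f S) ∧
      ∑ n, (y n : ℤ) = f Finset.univ :=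
  quantizedVCG_statement_7_general N f hf_norm hf_mono hf_sub
end

section
/- (Welfare loss of the FLOOR strategy.) Let M be a positive integer, δ > 0, and let f̃ : 2^𝒩 → ℤ be an integer-valued rank function with f̃(𝒩) = M; write P̃ for the integral polymatroid defined by f̃. For each n ∈ 𝒩, let u_n, ũ_n : {0,1,…,M} → ℝ satisfy u_n(y) − yδ ≤ ũ_n(y) ≤ u_n(y) for every integer 0 ≤ y ≤ M. If ỹ* maximizes ∑_{n=1}^N ũ_n(y_n) over P̃, then for every y ∈ P̃: ∑_{n=1}^N u_n(y_n) − ∑_{n=1}^N u_n(ỹ*_n) ≤ Mδ. -/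
/-!
Every point of the polymatroid has total size at most `f̃(𝒩) = M`, so on it `ũ` underestimates
`u` by at most `Mδ`, while it never overestimates `u`. Optimality of `ỹ*` for `ũ` then gives
`u(y) ≤ ũ(y) + Mδ ≤ ũ(ỹ*) + Mδ ≤ u(ỹ*) + Mδ`.
-/

open Finset

def integralPolymatroid {ι : Type*} (f : Finset ι → ℤ) : Set (ι → ℕ) :=
  {y | ∀ S, ∑ n ∈ S, (y n : ℤ) ≤ f S}

lemma sum_le_of_mem_integralPolymatroid {ι : Type*} [Fintype ι] {f : Finset ι → ℤ} {M : ℕ}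
    (hf : f univ = M) {y : ι → ℕ} (hy : y ∈ integralPolymatroid f) : ∑ n, y n ≤ M := by
  have := (hy univ).trans_eq hf
  exact_mod_cast this

section WelfareLoss

variable {ι : Type*} [Fintype ι] {M : ℕ} {δ : ℝ} {u ut : ι → ℕ → ℝ}

lemma le_of_sum_le {y : ι → ℕ} (hy : ∑ n, y n ≤ M) (n : ι) : y n ≤ M :=
  (single_le_sum (fun i _ => Nat.zero_le (y i)) (mem_univ n)).trans hy

lemma sum_le_sum_add_mul_of_sub_mul_le (hδ : 0 ≤ δ)
    (hu : ∀ n, ∀ m ≤ M, u n m - m * δ ≤ ut n m) {y : ι → ℕ} (hy : ∑ n, y n ≤ M) :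
    ∑ n, u n (y n) ≤ ∑ n, ut n (y n) + M * δ := by
  have hy_real : (∑ n, (y n : ℝ)) ≤ M := by exact_mod_cast hy
  calc ∑ n, u n (y n) ≤ ∑ n, (ut n (y n) + y n * δ) :=
        sum_le_sum fun n _ => by linarith [hu n (y n) (le_of_sum_le hy n)]
    _ = ∑ n, ut n (y n) + (∑ n, (y n : ℝ)) * δ := by rw [sum_add_distrib, sum_mul]
    _ ≤ ∑ n, ut n (y n) + M * δ := by gcongr

lemma welfare_loss_le {P : Set (ι → ℕ)} (hP : ∀ y ∈ P, ∑ n, y n ≤ M) (hδ : 0 ≤ δ)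
    (hu : ∀ n, ∀ m ≤ M, u n m - m * δ ≤ ut n m ∧ ut n m ≤ u n m)
    {ystar : ι → ℕ} (hystar : ystar ∈ P)
    (hopt : ∀ y ∈ P, ∑ n, ut n (y n) ≤ ∑ n, ut n (ystar n)) {y : ι → ℕ} (hy : y ∈ P) :
    ∑ n, u n (y n) - ∑ n, u n (ystar n) ≤ M * δ := by
  have hy_loss := sum_le_sum_add_mul_of_sub_mul_le hδ (fun n m hm => (hu n m hm).1) (hP y hy)
  have hystar_gain : ∑ n, ut n (ystar n) ≤ ∑ n, u n (ystar n) :=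
    sum_le_sum fun n _ => (hu n (ystar n) (le_of_sum_le (hP ystar hystar) n)).2
  linarith [hopt y hy]

end WelfareLoss

theorem quantizedVCG_statement_14_general (N M : ℕ)
    (δ : ℝ) (hδ : 0 < δ)
    (ft : Finset (Fin N) → ℤ)
    (hf_univ : ft Finset.univ = M)
    (u ut : Fin N → ℕ → ℝ)
    (hu : ∀ n : Fin N, ∀ m : ℕ, m ≤ M →
      u n m - (m : ℝ) * δ ≤ ut n m ∧ ut n m ≤ u n m)
    (ytstar : Fin N → ℕ)
    (hyt_mem : ∀ S : Finset (Fin N), ∑ n ∈ S, (ytstar n : ℤ) ≤ ft S)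
    (hyt_opt : ∀ y : Fin N → ℕ, (∀ S : Finset (Fin N), ∑ n ∈ S, (y n : ℤ) ≤ ft S) →
      ∑ n, ut n (y n) ≤ ∑ n, ut n (ytstar n)) :
    ∀ y : Fin N → ℕ, (∀ S : Finset (Fin N), ∑ n ∈ S, (y n : ℤ) ≤ ft S) →
      ∑ n, u n (y n) - ∑ n, u n (ytstar n) ≤ (M : ℝ) * δ :=
  fun _ hy => welfare_loss_le (P := integralPolymatroid ft)
    (fun _ hz => sum_le_of_mem_integralPolymatroid hf_univ hz) hδ.le hu hyt_mem hyt_opt hy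

/-- Welfare loss of the FLOOR strategy. If each reported utility `ũ_n`
satisfies `u_n(y) − yδ ≤ ũ_n(y) ≤ u_n(y)` on `{0,…,M}` and `ỹ*` maximizes `∑_n ũ_n(y_n)`
over the integral polymatroid `P̃` of `f̃` (with `f̃(𝒩) = M`), then for every `y ∈ P̃`
the welfare loss `∑_n u_n(y_n) − ∑_n u_n(ỹ*_n)` is at most `Mδ`. -/
theorem quantizedVCG_statement_14 (N M : ℕ) (hN : 1 ≤ N) (hM : 0 < M)
    (δ : ℝ) (hδ : 0 < δ)
    (ft : Finset (Fin N) → ℤ)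
    (hf_norm : ft ∅ = 0)
    (hf_mono : ∀ S T : Finset (Fin N), S ⊆ T → ft S ≤ ft T)
    (hf_sub : ∀ S T : Finset (Fin N), ft (S ∩ T) + ft (S ∪ T) ≤ ft S + ft T)
    (hf_univ : ft Finset.univ = M)
    (u ut : Fin N → ℕ → ℝ)
    (hu : ∀ n : Fin N, ∀ m : ℕ, m ≤ M →
      u n m - (m : ℝ) * δ ≤ ut n m ∧ ut n m ≤ u n m)
    (ytstar : Fin N → ℕ)
    (hyt_mem : ∀ S : Finset (Fin N), ∑ n ∈ S, (ytstar n : ℤ) ≤ ft S)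
    (hyt_opt : ∀ y : Fin N → ℕ, (∀ S : Finset (Fin N), ∑ n ∈ S, (y n : ℤ) ≤ ft S) →
      ∑ n, ut n (y n) ≤ ∑ n, ut n (ytstar n)) :
    ∀ y : Fin N → ℕ, (∀ S : Finset (Fin N), ∑ n ∈ S, (y n : ℤ) ≤ ft S) →
      ∑ n, u n (y n) - ∑ n, u n (ytstar n) ≤ (M : ℝ) * δ :=
  quantizedVCG_statement_14_general N M δ hδ ft hf_univ u ut hu ytstar hyt_mem hyt_opt
end

section
/- (ε-dominance of the CEILING strategy.) Fix an agent n ∈ {1,…,N}, a true utility u_n : ℕ → ℝ, a bid b_n : ℕ → ℝ, an ε ≥ 0 with 0 ≤ b_n(m) − u_n(m) ≤ ε for all m ∈ ℕ, and bid functions b_j : ℕ → ℝ for every agent j ≠ n. Let r_n : ℕ → ℝ be any alternative bid, let (y, p) be any VCG outcome for agent n under the profile in which agent n bids b_n and each j ≠ n bids b_j, and let (y', p') be any VCG outcome for agent n under the profile in which agent n bids r_n and each j ≠ n bids b_j. Then (u_n(y'_n) − p') − (u_n(y_n) − p) ≤ ε. -/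
open Finset

/-- A VCG outcome `(y, p)` for agent `n` given a finite nonempty set `Y ⊆ ℕ^N` of feasible
allocations and bid functions `b j : ℕ → ℝ`: `y ∈ Y` maximizes `∑_j b_j(z_j)` over `z ∈ Y`,
and `p = max_{z∈Y} ∑_{j≠n} b_j(z_j) − ∑_{j≠n} b_j(y_j)`. -/
def VCGOutcome {N : ℕ} (Y : Finset (Fin N → ℕ)) (hY : Y.Nonempty)
    (b : Fin N → ℕ → ℝ) (n : Fin N) (y : Fin N → ℕ) (p : ℝ) : Prop :=
  y ∈ Y ∧
  (∀ z ∈ Y, ∑ j, b j (z j) ≤ ∑ j, b j (y j)) ∧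
  p = Y.sup' hY (fun z => ∑ j ∈ univ.erase n, b j (z j)) - ∑ j ∈ univ.erase n, b j (y j)

/-!
The Clarke pivot `max_z ∑_{j≠n} b_j(z_j)` does not depend on agent `n`'s bid, so the payoff
`u(y_n) − p` of agent `n` is, up to that common constant, the welfare `u(y_n) + ∑_{j≠n} b_j(y_j)`.
Bidding `b_n ≥ u` with `b_n − u ≤ ε` makes the mechanism maximize `b_n(z_n) + ∑_{j≠n} b_j(z_j)`,
which overestimates this welfare everywhere and by at most `ε` at the chosen allocation.
-/

section Welfare

variable {ι : Type*} [Fintype ι] [DecidableEq ι]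

def othersWelfare (b : ι → ℕ → ℝ) (n : ι) (z : ι → ℕ) : ℝ :=
  ∑ j ∈ univ.erase n, b j (z j)

theorem othersWelfare_update (b : ι → ℕ → ℝ) (n : ι) (f : ℕ → ℝ) (z : ι → ℕ) :
    othersWelfare (Function.update b n f) n z = othersWelfare b n z :=
  sum_congr rfl fun _ hj => by rw [Function.update_of_ne (ne_of_mem_erase hj)]

theorem sum_update_eq_add_othersWelfare (b : ι → ℕ → ℝ) (n : ι) (f : ℕ → ℝ) (z : ι → ℕ) :
    ∑ j, Function.update b n f j (z j) = f (z n) + othersWelfare b n z := by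
  rw [← add_sum_erase _ _ (mem_univ n), Function.update_self, ← othersWelfare,
    othersWelfare_update]

end Welfare

namespace VCGOutcome

variable {N : ℕ} {Y : Finset (Fin N → ℕ)} {hY : Y.Nonempty} {b : Fin N → ℕ → ℝ} {n : Fin N}
  {f : ℕ → ℝ} {y : Fin N → ℕ} {p : ℝ}

theorem add_othersWelfare_le (h : VCGOutcome Y hY (Function.update b n f) n y p)
    {z : Fin N → ℕ} (hz : z ∈ Y) :
    f (z n) + othersWelfare b n z ≤ f (y n) + othersWelfare b n y := by
  simpa only [sum_update_eq_add_othersWelfare] using h.2.1 z hz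

theorem payoff_eq (h : VCGOutcome Y hY (Function.update b n f) n y p) (u : ℕ → ℝ) :
    u (y n) - p = u (y n) + othersWelfare b n y - Y.sup' hY (othersWelfare b n) := by
  have hp : p = Y.sup' hY (othersWelfare (Function.update b n f) n)
      - othersWelfare (Function.update b n f) n y := h.2.2
  simp only [hp, othersWelfare_update]
  ring

end VCGOutcome

theorem quantizedVCG_statement_15_general (N : ℕ)
    (Y : Finset (Fin N → ℕ)) (hY : Y.Nonempty)
    (n : Fin N) (u : ℕ → ℝ) (bn : ℕ → ℝ) (ε : ℝ)
    (hceil : ∀ m : ℕ, 0 ≤ bn m - u m ∧ bn m - u m ≤ ε)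
    (b : Fin N → ℕ → ℝ) (r : ℕ → ℝ)
    (y : Fin N → ℕ) (p : ℝ) (y' : Fin N → ℕ) (p' : ℝ)
    (hbid : VCGOutcome Y hY (Function.update b n bn) n y p)
    (halt : VCGOutcome Y hY (Function.update b n r) n y' p') :
    (u (y' n) - p') - (u (y n) - p) ≤ ε := by
  have hmax := hbid.add_othersWelfare_le halt.1
  have hover := (hceil (y' n)).1
  have hclose := (hceil (y n)).2
  rw [hbid.payoff_eq u, halt.payoff_eq u]
  linarith

/-- ε-dominance of the CEILING strategy. If agent `n`'s bid `bn` satisfies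
`0 ≤ bn(m) − u_n(m) ≤ ε` for all `m`, then any unilateral deviation gains at most `ε`. -/
theorem quantizedVCG_statement_15 (N : ℕ) (hN : 1 ≤ N)
    (Y : Finset (Fin N → ℕ)) (hY : Y.Nonempty)
    (n : Fin N) (u : ℕ → ℝ) (bn : ℕ → ℝ) (ε : ℝ) (hε : 0 ≤ ε)
    (hceil : ∀ m : ℕ, 0 ≤ bn m - u m ∧ bn m - u m ≤ ε)
    (b : Fin N → ℕ → ℝ) (r : ℕ → ℝ)
    (y : Fin N → ℕ) (p : ℝ) (y' : Fin N → ℕ) (p' : ℝ)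
    (hbid : VCGOutcome Y hY (Function.update b n bn) n y p)
    (halt : VCGOutcome Y hY (Function.update b n r) n y' p') :
    (u (y' n) - p') - (u (y n) - p) ≤ ε :=
  quantizedVCG_statement_15_general N Y hY n u bn ε hceil b r y p y' p' hbid halt
end

section
/- (Welfare loss under inconsistent strategies.) Let M be a positive integer, δ > 0, and let f̃ : 2^𝒩 → ℤ be an integer-valued rank function with f̃(𝒩) = M; write P̃ for the integral polymatroid defined by f̃. For each n ∈ 𝒩, let u_n, ũ_n : {0,1,…,M} → ℝ satisfy |ũ_n(y) − u_n(y)| ≤ yδ for every integer 0 ≤ y ≤ M. If ỹ* maximizes ∑_{n=1}^N ũ_n(y_n) over P̃, then for every y ∈ P̃: ∑_{n=1}^N u_n(y_n) − ∑_{n=1}^N u_n(ỹ*_n) ≤ 2Mδ. -/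
open Finset

/-! Each utility estimate errs by at most `y_n δ` at `y_n`, and every point of the polymatroid has
total size `∑ y_n ≤ f̃(𝒩) = M`, so the true and reported welfares differ by at most `Mδ` on `P̃`.
Passing from `u` to `ũ` at `y`, using the optimality of `ỹ*` for `ũ`, and passing back from `ũ`
to `u` at `ỹ*` costs `Mδ` twice. -/

theorem sum_le_of_forall_sum_le {ι : Type*} [Fintype ι] {f : Finset ι → ℤ} {M : ℕ}
    (hf_univ : f univ = M) {z : ι → ℕ} (hz : ∀ S : Finset ι, ∑ n ∈ S, (z n : ℤ) ≤ f S) :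
    ∑ n, z n ≤ M := by
  have h := hz univ
  rw [hf_univ] at h
  exact_mod_cast h

theorem sum_apply_le_sum_apply_add {ι : Type*} [Fintype ι] {M : ℕ} {δ : ℝ} (hδ : 0 ≤ δ)
    {v w : ι → ℕ → ℝ} (hvw : ∀ n m, m ≤ M → v n m ≤ w n m + m * δ)
    {z : ι → ℕ} (hz : ∑ n, z n ≤ M) :
    ∑ n, v n (z n) ≤ ∑ n, w n (z n) + M * δ :=
  calc ∑ n, v n (z n) ≤ ∑ n, (w n (z n) + z n * δ) :=
        sum_le_sum fun n _ ↦ hvw n _ ((single_le_sum (by simp) (mem_univ n)).trans hz)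
    _ = ∑ n, w n (z n) + ((∑ n, z n : ℕ) : ℝ) * δ := by
        rw [sum_add_distrib, ← sum_mul, Nat.cast_sum]
    _ ≤ ∑ n, w n (z n) + M * δ := by gcongr

theorem quantizedVCG_statement_18_general (N M : ℕ)
    (δ : ℝ) (hδ : 0 < δ)
    (ft : Finset (Fin N) → ℤ)
    (hf_univ : ft Finset.univ = M)
    (u ut : Fin N → ℕ → ℝ)
    (hu : ∀ n : Fin N, ∀ m : ℕ, m ≤ M → |ut n m - u n m| ≤ (m : ℝ) * δ)
    (ytstar : Fin N → ℕ)
    (hyt_mem : ∀ S : Finset (Fin N), ∑ n ∈ S, (ytstar n : ℤ) ≤ ft S)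
    (hyt_opt : ∀ y : Fin N → ℕ, (∀ S : Finset (Fin N), ∑ n ∈ S, (y n : ℤ) ≤ ft S) →
      ∑ n, ut n (y n) ≤ ∑ n, ut n (ytstar n)) :
    ∀ y : Fin N → ℕ, (∀ S : Finset (Fin N), ∑ n ∈ S, (y n : ℤ) ≤ ft S) →
      ∑ n, u n (y n) - ∑ n, u n (ytstar n) ≤ 2 * (M : ℝ) * δ := by
  intro y hy
  have hu_le : ∀ n m, m ≤ M → u n m ≤ ut n m + m * δ := fun n m hm ↦ by
    linarith [(abs_le.mp (hu n m hm)).1]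
  have hut_le : ∀ n m, m ≤ M → ut n m ≤ u n m + m * δ := fun n m hm ↦ by
    linarith [(abs_le.mp (hu n m hm)).2]
  have h_y := sum_apply_le_sum_apply_add hδ.le hu_le (sum_le_of_forall_sum_le hf_univ hy)
  have h_ytstar :=
    sum_apply_le_sum_apply_add hδ.le hut_le (sum_le_of_forall_sum_le hf_univ hyt_mem)
  linarith [hyt_opt y hy]

/-- Welfare loss under inconsistent strategies. If each reported utility `ũ_n`
satisfies `|ũ_n(y) − u_n(y)| ≤ yδ` on `{0,…,M}` and `ỹ*` maximizes `∑_n ũ_n(y_n)` over the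
integral polymatroid `P̃` of `f̃` (with `f̃(𝒩) = M`), then for every `y ∈ P̃` the welfare
loss `∑_n u_n(y_n) − ∑_n u_n(ỹ*_n)` is at most `2Mδ`. -/
theorem quantizedVCG_statement_18 (N M : ℕ) (hN : 1 ≤ N) (hM : 0 < M)
    (δ : ℝ) (hδ : 0 < δ)
    (ft : Finset (Fin N) → ℤ)
    (hf_norm : ft ∅ = 0)
    (hf_mono : ∀ S T : Finset (Fin N), S ⊆ T → ft S ≤ ft T)
    (hf_sub : ∀ S T : Finset (Fin N), ft (S ∩ T) + ft (S ∪ T) ≤ ft S + ft T)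
    (hf_univ : ft Finset.univ = M)
    (u ut : Fin N → ℕ → ℝ)
    (hu : ∀ n : Fin N, ∀ m : ℕ, m ≤ M → |ut n m - u n m| ≤ (m : ℝ) * δ)
    (ytstar : Fin N → ℕ)
    (hyt_mem : ∀ S : Finset (Fin N), ∑ n ∈ S, (ytstar n : ℤ) ≤ ft S)
    (hyt_opt : ∀ y : Fin N → ℕ, (∀ S : Finset (Fin N), ∑ n ∈ S, (y n : ℤ) ≤ ft S) →
      ∑ n, ut n (y n) ≤ ∑ n, ut n (ytstar n)) :
    ∀ y : Fin N → ℕ, (∀ S : Finset (Fin N), ∑ n ∈ S, (y n : ℤ) ≤ ft S) →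
      ∑ n, u n (y n) - ∑ n, u n (ytstar n) ≤ 2 * (M : ℝ) * δ :=
  quantizedVCG_statement_18_general N M δ hδ ft hf_univ u ut hu ytstar hyt_mem hyt_opt
end
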